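/- arXiv:1603.08097 — 2 statements merged into one kernel-verified Lean document; each statement's English description precedes it below -/
import Mathlib

section
/- For every natural number j ≥ 1, the series ∑_{r=1}^∞ arctan( F_{2j}·√(5·L_{4j})·L_{4jr} / L_{8jr} ) converges and its sum equals arctan( (1/√5)·√(L_{4j}) / F_{2j} ). -/
def lucas : ℕ → ℕ
  | 0 => 2
  | 1 => 1
  | n + 2 => lucas (n + 1) + lucas n

/-!
Put `x = φ ^ (2j)`. Since `φψ = -1`, `ψ ^ (2j) = x⁻¹`, so Binet's formulas give
`L (2jk) = x ^ k + x⁻¹ ^ k` and `√5 F (2j) = x - x⁻¹`. With `c = √(L (4j))`, so that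
`c² = x² + x⁻²`, and `t n = c / (x ^ (2n+1) - x⁻¹ ^ (2n+1))`, the subtraction formula for `arctan`
turns the `r`-th term of the series into `arctan (t r) - arctan (t (r+1))`. The series telescopes
to `arctan (t 0) = arctan (c / (x - x⁻¹))` because `t n → 0`.
-/

open Real Filter Topology
open scoped goldenRatio

theorem hasSum_sub_succ_of_tendsto {f : ℕ → ℝ} {l : ℝ} (hf : ∀ n, f (n + 1) ≤ f n)
    (h : Tendsto f atTop (𝓝 l)) : HasSum (fun n ↦ f n - f (n + 1)) (f 0 - l) := by
  rw [hasSum_iff_tendsto_nat_of_nonneg (fun n ↦ sub_nonneg.2 (hf n))]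
  simp_rw [Finset.sum_range_sub']
  exact tendsto_const_nhds.sub h

theorem Real.arctan_sub_arctan {x y : ℝ} (h : -1 < x * y) :
    arctan x - arctan y = arctan ((x - y) / (1 + x * y)) := by
  rw [sub_eq_add_neg, ← arctan_neg, arctan_add (by linarith [mul_neg x y])]
  congr 2; ring

theorem Real.arctan_div_sub_arctan_div {a b c : ℝ} (ha : 0 < a) (hb : 0 < b) :
    arctan (c / a) - arctan (c / b) = arctan (c * (b - a) / (a * b + c ^ 2)) := by
  have hprod : 0 ≤ c / a * (c / b) := by
    rw [div_mul_div_comm, ← sq]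
    positivity
  rw [arctan_sub_arctan (by linarith)]
  congr 1
  field_simp

theorem coe_lucas_eq : ∀ n, (lucas n : ℝ) = φ ^ n + ψ ^ n
  | 0 => by norm_num [lucas]
  | 1 => by rw [pow_one, pow_one, goldenRatio_add_goldenConj]; norm_num [lucas]
  | n + 2 => by
    rw [lucas, Nat.cast_add, coe_lucas_eq (n + 1), coe_lucas_eq n]
    linear_combination -φ ^ n * goldenRatio_sq - ψ ^ n * goldenConj_sq

theorem Real.goldenConj_pow_two_mul (j : ℕ) : ψ ^ (2 * j) = (φ ^ (2 * j))⁻¹ := by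
  refine eq_inv_of_mul_eq_one_left ?_
  rw [← mul_pow, goldenConj_mul_goldenRatio, pow_mul]
  norm_num

theorem coe_lucas_two_mul_mul (j k : ℕ) :
    (lucas (2 * j * k) : ℝ) = (φ ^ (2 * j)) ^ k + (φ ^ (2 * j))⁻¹ ^ k := by
  rw [coe_lucas_eq, pow_mul φ, pow_mul ψ, goldenConj_pow_two_mul]

theorem coe_fib_two_mul (j : ℕ) :
    (Nat.fib (2 * j) : ℝ) = (φ ^ (2 * j) - (φ ^ (2 * j))⁻¹) / √5 := by
  rw [coe_fib_eq, goldenConj_pow_two_mul]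

section

variable {x : ℝ}

theorem inv_pow_lt_pow (hx : 1 < x) {m : ℕ} (hm : m ≠ 0) : x⁻¹ ^ m < x ^ m :=
  (pow_lt_one₀ (by positivity) (inv_lt_one_of_one_lt₀ hx) hm).trans (one_lt_pow₀ hx hm)

theorem tendsto_pow_sub_inv_pow_atTop (hx : 1 < x) : Tendsto (fun m : ℕ ↦ x ^ m - x⁻¹ ^ m) atTop atTop :=
  (tendsto_pow_atTop_atTop_of_one_lt hx).atTop_add
    (tendsto_pow_atTop_nhds_zero_of_lt_one (by positivity) (inv_lt_one_of_one_lt₀ hx)).neg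

variable {c : ℝ}

theorem arctan_div_pow_sub_inv_pow_sub_succ (hx : 1 < x) (hc2 : c ^ 2 = x ^ 2 + x⁻¹ ^ 2)
    (n : ℕ) :
    arctan (c / (x ^ (2 * n + 1) - x⁻¹ ^ (2 * n + 1))) -
        arctan (c / (x ^ (2 * (n + 1) + 1) - x⁻¹ ^ (2 * (n + 1) + 1))) =
      arctan ((x - x⁻¹) * c * (x ^ (2 * n + 2) + x⁻¹ ^ (2 * n + 2)) /
        (x ^ (4 * n + 4) + x⁻¹ ^ (4 * n + 4))) := by
  rw [arctan_div_sub_arctan_div (sub_pos.2 (inv_pow_lt_pow hx (by omega)))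
    (sub_pos.2 (inv_pow_lt_pow hx (by omega)))]
  have hxy : x * x⁻¹ = 1 := mul_inv_cancel₀ (by positivity)
  generalize x⁻¹ = y at hxy hc2
  have hpow : (x * y) ^ (2 * n + 1) = 1 := by rw [hxy, one_pow]
  have hnum : c * (x ^ (2 * (n + 1) + 1) - y ^ (2 * (n + 1) + 1) -
      (x ^ (2 * n + 1) - y ^ (2 * n + 1))) = (x - y) * c * (x ^ (2 * n + 2) + y ^ (2 * n + 2)) := by
    linear_combination c * (x ^ (2 * n + 1) - y ^ (2 * n + 1)) * hxy
  have hden : (x ^ (2 * n + 1) - y ^ (2 * n + 1)) * (x ^ (2 * (n + 1) + 1) - y ^ (2 * (n + 1) + 1)) +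
      c ^ 2 = x ^ (4 * n + 4) + y ^ (4 * n + 4) := by
    linear_combination hc2 - (x ^ 2 + y ^ 2) * hpow
  rw [hnum, hden]

theorem hasSum_arctan_pow_add_inv_pow_div (hx : 1 < x) (hc2 : c ^ 2 = x ^ 2 + x⁻¹ ^ 2)
    (hc : 0 ≤ c) :
    HasSum (fun n : ℕ ↦ arctan ((x - x⁻¹) * c * (x ^ (2 * n + 2) + x⁻¹ ^ (2 * n + 2)) /
        (x ^ (4 * n + 4) + x⁻¹ ^ (4 * n + 4))))
      (arctan (c / (x - x⁻¹))) := by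
  set t : ℕ → ℝ := fun n ↦ c / (x ^ (2 * n + 1) - x⁻¹ ^ (2 * n + 1))
  have hstep := arctan_div_pow_sub_inv_pow_sub_succ hx hc2
  have hx' : 0 ≤ x - x⁻¹ := by simpa using (inv_pow_lt_pow hx one_ne_zero).le
  have hanti (n : ℕ) : arctan (t (n + 1)) ≤ arctan (t n) := by
    rw [← sub_nonneg, hstep, arctan_nonneg]
    exact div_nonneg (mul_nonneg (mul_nonneg hx' hc) (by positivity)) (by positivity)
  have ht : Tendsto t atTop (𝓝 0) :=
    tendsto_const_nhds.div_atTop ((tendsto_pow_sub_inv_pow_atTop hx).comp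
      (tendsto_atTop_mono (fun n ↦ (by omega : n ≤ 2 * n + 1)) tendsto_id))
  have hlim : Tendsto (fun n ↦ arctan (t n)) atTop (𝓝 0) :=
    (continuous_arctan.tendsto' 0 0 arctan_zero).comp ht
  convert hasSum_sub_succ_of_tendsto hanti hlim using 1
  · exact funext fun n ↦ (hstep n).symm
  · simp [t]

end

theorem stmt10 (j : ℕ) (hj : 1 ≤ j) :
    HasSum (fun r : ℕ =>
        Real.arctan ((Nat.fib (2 * j) : ℝ) * Real.sqrt (5 * (lucas (4 * j) : ℝ)) *
            (lucas (4 * j * (1 + r)) : ℝ) / (lucas (8 * j * (1 + r)) : ℝ)))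
      (Real.arctan ((1 / Real.sqrt 5) * Real.sqrt (lucas (4 * j) : ℝ) /
        (Nat.fib (2 * j) : ℝ))) := by
  set x := φ ^ (2 * j)
  have hx : 1 < x := one_lt_pow₀ one_lt_goldenRatio (by omega)
  have hL (k m : ℕ) (hk : k = 2 * j * m) : (lucas k : ℝ) = x ^ m + x⁻¹ ^ m := by
    rw [hk, coe_lucas_two_mul_mul]
  have hF : (Nat.fib (2 * j) : ℝ) = (x - x⁻¹) / √5 := coe_fib_two_mul j
  have hc2 : √(lucas (4 * j) : ℝ) ^ 2 = x ^ 2 + x⁻¹ ^ 2 := by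
    rw [sq_sqrt (Nat.cast_nonneg _), hL _ 2 (by ring)]
  convert hasSum_arctan_pow_add_inv_pow_div hx hc2 (sqrt_nonneg _) using 1
  · ext r
    congr 1
    rw [hF, sqrt_mul (by norm_num), hL (4 * j * (1 + r)) (2 * r + 2) (by ring),
      hL (8 * j * (1 + r)) (4 * r + 4) (by ring)]
    field_simp
  · congr 1
    rw [hF]
    field_simp
end

section
/- For all natural numbers j ≥ 1 and k ≥ 1, the series ∑_{r=1}^∞ arctan( F_{4j−2} / F_{(4j−2)r+2k−1} ) converges and its sum equals arctan( F_{2j−1} / F_{2j+2k−2} ). -/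
/-!
For odd `m` and even `a > 0`, Catalan's identity `F_a F_{a+2m} + F_m² = F_{a+m}²` together with
`F_m (F_{a+2m} - F_a) = F_{2m} F_{a+m}` turns the subtraction formula for `arctan` into
`arctan (F_{2m} / F_{a+m}) = arctan (F_m / F_a) - arctan (F_m / F_{a+2m})`.
With `m = 2j - 1` and `a = 2j + 2k - 2` the series therefore telescopes along `a + 2mr`,
and its tail `arctan (F_m / F_{a+2mr})` tends to `0`.
-/

open Real Filter Topology
open scoped goldenRatio

theorem Nat.fib_add_sq_of_even {a : ℕ} (ha : Even a) (m : ℕ) :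
    Nat.fib (a + m) ^ 2 = Nat.fib a * Nat.fib (a + 2 * m) + Nat.fib m ^ 2 := by
  have h := Int.fib_add_sq_sub_fib_mul_fib_add_two_mul a m
  rw [Int.natAbs_natCast, ha.neg_one_pow, one_mul, sub_eq_iff_eq_add'] at h
  zify
  simpa only [← Int.fib_natCast, Nat.cast_add, Nat.cast_mul, Nat.cast_ofNat] using h

theorem Nat.fib_mul_fib_add_two_mul_add_neg_one_pow (a m : ℕ) :
    (Nat.fib m : ℝ) * (Nat.fib (a + 2 * m) + (-1) ^ m * Nat.fib a)
      = Nat.fib (2 * m) * Nat.fib (a + m) := by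
  have hsign : ((-1 : ℝ)) ^ m = φ ^ m * ψ ^ m := by rw [← mul_pow, goldenRatio_mul_goldenConj]
  -- Binet's formula makes this a polynomial identity in `φ ^ m`, `ψ ^ m`, `φ ^ a`, `ψ ^ a`.
  simp only [Real.coe_fib_eq, hsign, pow_add, pow_mul']
  generalize φ ^ m = P, ψ ^ m = Q, φ ^ a = A, ψ ^ a = B
  field_simp
  ring

theorem arctan_fib_two_mul_div_fib_add {m a : ℕ} (hm : Odd m) (ha : Even a) (ha0 : 0 < a) :
    arctan (Nat.fib (2 * m) / Nat.fib (a + m))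
      = arctan (Nat.fib m / Nat.fib a) - arctan (Nat.fib m / Nat.fib (a + 2 * m)) := by
  have hpos : ∀ n, 0 < n → (0 : ℝ) < Nat.fib n := fun n hn => by exact_mod_cast Nat.fib_pos.2 hn
  have hA := hpos a ha0
  have hB := hpos (a + m) (by omega)
  have hC := hpos (a + 2 * m) (by omega)
  have hcat : (Nat.fib (a + m) : ℝ) ^ 2 = Nat.fib a * Nat.fib (a + 2 * m) + Nat.fib m ^ 2 := by
    exact_mod_cast Nat.fib_add_sq_of_even ha m
  have hdiff := Nat.fib_mul_fib_add_two_mul_add_neg_one_pow a m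
  rw [hm.neg_one_pow, neg_one_mul, ← sub_eq_add_neg] at hdiff
  have hprod : Nat.fib m / Nat.fib a * -(Nat.fib m / Nat.fib (a + 2 * m) : ℝ) < 1 := by
    have : (0 : ℝ) ≤ Nat.fib m / Nat.fib a * (Nat.fib m / Nat.fib (a + 2 * m)) := by positivity
    linarith
  rw [sub_eq_add_neg, ← arctan_neg, arctan_add hprod]
  congr 1
  field_simp
  rw [eq_div_iff (by nlinarith)]
  linear_combination (-(Nat.fib (a + m) : ℝ)) * hdiff - (Nat.fib (2 * m) : ℝ) * hcat

theorem Nat.tendsto_fib_atTop : Tendsto Nat.fib atTop atTop :=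
  tendsto_atTop_mono' atTop ((eventually_ge_atTop 5).mono fun _ hn => Nat.le_fib_self hn) tendsto_id

theorem hasSum_arctan_fib_two_mul_div_fib {m a : ℕ} (hm : Odd m) (ha : Even a) (ha0 : 0 < a) :
    HasSum (fun r : ℕ => arctan (Nat.fib (2 * m) / Nat.fib (a + 2 * m * r + m)))
      (arctan (Nat.fib m / Nat.fib a)) := by
  set g : ℕ → ℝ := fun r => arctan (Nat.fib m / Nat.fib (a + 2 * m * r))
  have hstep (r : ℕ) :
      arctan (Nat.fib (2 * m) / Nat.fib (a + 2 * m * r + m)) = g r - g (r + 1) := by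
    rw [arctan_fib_two_mul_div_fib_add hm (ha.add ((even_two_mul m).mul_right r)) (by omega)]
    simp only [g, mul_add, mul_one, add_assoc]
  have hg : Tendsto g atTop (𝓝 0) := by
    have hidx : Tendsto (fun r => a + 2 * m * r) atTop atTop :=
      ((strictMono_mul_left_of_pos (by have := hm.pos; omega)).const_add a).tendsto_atTop
    have hfrac := tendsto_const_nhds (x := (Nat.fib m : ℝ)).div_atTop
      (tendsto_natCast_atTop_atTop.comp (Nat.tendsto_fib_atTop.comp hidx))
    have := (continuous_arctan.tendsto 0).comp hfrac
    rwa [arctan_zero] at this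
  have hnonneg (r : ℕ) : 0 ≤ arctan (Nat.fib (2 * m) / Nat.fib (a + 2 * m * r + m)) :=
    arctan_nonneg.2 (by positivity)
  rw [hasSum_iff_tendsto_nat_of_nonneg hnonneg]
  simp only [hstep, Finset.sum_range_sub']
  simpa [g] using hg.const_sub (g 0)

theorem stmt13 (j k : ℕ) (hj : 1 ≤ j) (hk : 1 ≤ k) :
    HasSum (fun r : ℕ =>
        Real.arctan ((Nat.fib (4 * j - 2) : ℝ) /
          (Nat.fib ((4 * j - 2) * (1 + r) + 2 * k - 1) : ℝ)))
      (Real.arctan ((Nat.fib (2 * j - 1) : ℝ) / (Nat.fib (2 * j + 2 * k - 2) : ℝ))) := by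
  set m := 2 * j - 1
  have hm : Odd m := ⟨j - 1, by omega⟩
  have ha : Even (2 * j + 2 * k - 2) := ⟨j + k - 1, by omega⟩
  rw [show 4 * j - 2 = 2 * m by omega]
  convert hasSum_arctan_fib_two_mul_div_fib hm ha (by omega) using 6 with r
  have : 2 * m * (1 + r) = 2 * m * r + 2 * m := by ring
  omega
end
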